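/- Radial coercivity of the self-similar transport field of the profile and exponential escape of its trajectories: Let W̄ : ℝ³ → ℝ be defined by W̄(y) = B(y̌)^{−1/2} W₁d( B(y̌)^{3/2} y₁ ), where y̌ = (y₂,y₃) and B(y̌) = 1/(1 + y₂² + y₃²). Then: (i) |W̄(y)| ≤ |y₁| for every y ∈ ℝ³; (ii) for every y ∈ ℝ³, y₁( (3/2)y₁ + W̄(y) ) + (1/2)y₂² + (1/2)y₃² ≥ (1/2)|y|², where |y|² = y₁² + y₂² + y₃²; (iii) consequently, if s₀ ∈ ℝ and Φ : [s₀, ∞) → ℝ³ is a C¹ solution of the trajectory ODE Φ′(s) = ( (3/2)Φ₁(s) + W̄(Φ(s)), (1/2)Φ₂(s), (1/2)Φ₃(s) ), then |Φ(s)| ≥ |Φ(s₀)| e^{(s−s₀)/2} for all s ≥ s₀; in particular every trajectory starting away from the origin escapes to spatial infinity exponentially fast. -/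

import Mathlib

noncomputable section

/-- Points of self-similar space `ℝ³`. -/
abbrev V3 : Type := Fin 3 → ℝ

/-- The stable self-similar profile of the 1D Burgers equation. -/
def W1d (y : ℝ) : ℝ :=
  (-y / 2 + Real.sqrt (1 / 27 + y ^ 2 / 4)) ^ ((1 : ℝ) / 3)
    - (y / 2 + Real.sqrt (1 / 27 + y ^ 2 / 4)) ^ ((1 : ℝ) / 3)

/-- `B(y̌) = 1/(1 + y₂² + y₃²)`. -/
def Bf (y : V3) : ℝ := 1 / (1 + y 1 ^ 2 + y 2 ^ 2)

/-- The explicit 3D self-similar Burgers profile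
`W̄(y) = B(y̌)^{−1/2} W₁d(B(y̌)^{3/2} y₁)`. -/
def Wbar (y : V3) : ℝ :=
  Bf y ^ (-(1 : ℝ) / 2) * W1d (Bf y ^ ((3 : ℝ) / 2) * y 0)

/-- The Euclidean norm on `ℝ³`. -/
def eNorm3 (y : V3) : ℝ := Real.sqrt (y 0 ^ 2 + y 1 ^ 2 + y 2 ^ 2)

/-- The self-similar transport velocity of the profile:
`V(y) = ((3/2)y₁ + W̄(y), (1/2)y₂, (1/2)y₃)`. -/
def burgersField (y : V3) : V3 :=
  ![3 / 2 * y 0 + Wbar y, 1 / 2 * y 1, 1 / 2 * y 2]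


/-! Cardano's formula shows that `w = W₁d(y)` solves `w³ + w + y = 0`, whence `|w| ≤ |y|`; since
`B ≤ 1`, the scaling in `W̄` gives `|W̄(y)| ≤ B |y₁| ≤ |y₁|`, i.e. `y₁ W̄(y) ≥ -y₁²`, which is the
coercivity `y · V(y) ≥ |y|²/2`. Along a trajectory `(|Φ|²)' = 2 Φ · V(Φ) ≥ |Φ|²`, so
`|Φ(s)|² e^{-(s - s₀)}` is nondecreasing. -/

open Real Set

lemma rpow_one_third_pow_three {a : ℝ} (ha : 0 ≤ a) : (a ^ ((1 : ℝ) / 3)) ^ 3 = a := by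
  simpa [one_div] using rpow_inv_natCast_pow ha (n := 3) (by norm_num)

lemma W1d_cubic (y : ℝ) : W1d y ^ 3 + W1d y + y = 0 := by
  set s := √(1 / 27 + y ^ 2 / 4)
  have hs : s ^ 2 = 1 / 27 + y ^ 2 / 4 := sq_sqrt (by positivity)
  have hys : |y| / 2 < s := by
    rw [← sqrt_sq (by positivity : 0 ≤ |y| / 2)]
    exact sqrt_lt_sqrt (by positivity) (by rw [div_pow, sq_abs]; linarith)
  have ha : 0 ≤ -y / 2 + s := by linarith [le_abs_self y]
  have hb : 0 ≤ y / 2 + s := by linarith [neg_abs_le y]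
  have hprod : (-y / 2 + s) ^ ((1 : ℝ) / 3) * (y / 2 + s) ^ ((1 : ℝ) / 3) = 1 / 3 := by
    rw [← mul_rpow ha hb, show (-y / 2 + s) * (y / 2 + s) = (1 / 3) ^ 3 by linear_combination hs]
    simpa [one_div] using pow_rpow_inv_natCast (by norm_num : (0 : ℝ) ≤ 3⁻¹) (n := 3) (by norm_num)
  unfold W1d
  linear_combination rpow_one_third_pow_three ha - rpow_one_third_pow_three hb
    - 3 * ((-y / 2 + s) ^ ((1 : ℝ) / 3) - (y / 2 + s) ^ ((1 : ℝ) / 3)) * hprod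

lemma abs_le_of_cube_add_add_eq_zero {w y : ℝ} (h : w ^ 3 + w + y = 0) : |w| ≤ |y| := by
  have hy : |y| = |w| * (1 + w ^ 2) := by
    rw [show y = -(w * (1 + w ^ 2)) by linear_combination h, abs_neg, abs_mul,
      abs_of_pos (by positivity : (0 : ℝ) < 1 + w ^ 2)]
  rw [hy]
  exact le_mul_of_one_le_right (abs_nonneg w) (by nlinarith [sq_nonneg w])

lemma abs_rpow_mul_W1d_le {b : ℝ} (hb : 0 < b) (x : ℝ) :
    |b ^ (-(1 : ℝ) / 2) * W1d (b ^ ((3 : ℝ) / 2) * x)| ≤ b * |x| :=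
  calc |b ^ (-(1 : ℝ) / 2) * W1d (b ^ ((3 : ℝ) / 2) * x)|
      ≤ b ^ (-(1 : ℝ) / 2) * (b ^ ((3 : ℝ) / 2) * |x|) := by
        rw [abs_mul, abs_of_pos (rpow_pos_of_pos hb _)]
        gcongr
        exact (abs_le_of_cube_add_add_eq_zero (W1d_cubic _)).trans_eq
          (by rw [abs_mul, abs_of_pos (rpow_pos_of_pos hb _)])
    _ = b * |x| := by rw [← mul_assoc, ← rpow_add hb]; norm_num

lemma Bf_pos (y : V3) : 0 < Bf y := by unfold Bf; positivity

lemma Bf_le_one (y : V3) : Bf y ≤ 1 := by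
  unfold Bf
  rw [div_le_one (by positivity)]
  nlinarith [sq_nonneg (y 1), sq_nonneg (y 2)]

lemma abs_Wbar_le (y : V3) : |Wbar y| ≤ |y 0| :=
  calc |Wbar y| ≤ Bf y * |y 0| := abs_rpow_mul_W1d_le (Bf_pos y) (y 0)
    _ ≤ |y 0| := mul_le_of_le_one_left (abs_nonneg _) (Bf_le_one y)

lemma neg_sq_le_mul_of_abs_le {x w : ℝ} (h : |w| ≤ |x|) : -x ^ 2 ≤ x * w := by
  have : |x * w| ≤ x ^ 2 := by
    rw [abs_mul, ← sq_abs x, sq]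
    exact mul_le_mul_of_nonneg_left h (abs_nonneg x)
  linarith [neg_abs_le (x * w)]

lemma burgersField_coercive (y : V3) :
    1 / 2 * (y 0 ^ 2 + y 1 ^ 2 + y 2 ^ 2) ≤
      y 0 * (3 / 2 * y 0 + Wbar y) + 1 / 2 * y 1 ^ 2 + 1 / 2 * y 2 ^ 2 := by
  linarith [neg_sq_le_mul_of_abs_le (abs_Wbar_le y)]

lemma mul_exp_le_of_mul_le_deriv {g g' : ℝ → ℝ} {s₀ c : ℝ}
    (hg : ∀ t ∈ Ici s₀, HasDerivWithinAt g (g' t) (Ici s₀) t)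
    (hle : ∀ t ∈ Ici s₀, c * g t ≤ g' t) {s : ℝ} (hs : s ∈ Ici s₀) :
    g s₀ * exp (c * (s - s₀)) ≤ g s := by
  set h : ℝ → ℝ := fun t => g t * exp (c * (s₀ - t))
  have hh : ∀ t ∈ Ici s₀,
      HasDerivWithinAt h ((g' t - c * g t) * exp (c * (s₀ - t))) (Ici s₀) t := fun t ht =>
    have hexp := (((hasDerivAt_id t).const_sub s₀).const_mul c).exp
    ((hg t ht).mul hexp.hasDerivWithinAt).congr_deriv (by simp only [id]; ring)
  have hmono : MonotoneOn h (Ici s₀) := by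
    refine monotoneOn_of_hasDerivWithinAt_nonneg
      (f' := fun t => (g' t - c * g t) * exp (c * (s₀ - t))) (convex_Ici s₀)
      (fun t ht => (hh t ht).continuousWithinAt) (fun t ht => ?_) (fun t ht => ?_)
    · rw [interior_Ici] at ht ⊢
      exact (hh t (Ioi_subset_Ici_self ht)).mono Ioi_subset_Ici_self
    · rw [interior_Ici] at ht
      exact mul_nonneg (sub_nonneg.2 (hle t (Ioi_subset_Ici_self ht))) (exp_pos _).le
  have key : g s₀ ≤ g s * exp (c * (s₀ - s)) := by
    simpa [h] using hmono self_mem_Ici hs hs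
  calc g s₀ * exp (c * (s - s₀)) ≤ g s * exp (c * (s₀ - s)) * exp (c * (s - s₀)) := by gcongr
    _ = g s := by
      rw [mul_assoc, ← exp_add, ← mul_add, sub_add_sub_cancel, sub_self, mul_zero, exp_zero,
        mul_one]

lemma HasDerivWithinAt.sq_add_sq_add_sq {Φ : ℝ → V3} {Φ' : V3} {S : Set ℝ} {t : ℝ}
    (hΦ : HasDerivWithinAt Φ Φ' S t) :
    HasDerivWithinAt (fun s => Φ s 0 ^ 2 + Φ s 1 ^ 2 + Φ s 2 ^ 2)
      (2 * (Φ t 0 * Φ' 0 + Φ t 1 * Φ' 1 + Φ t 2 * Φ' 2)) S t := by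
  have hi := hasDerivWithinAt_pi.mp hΦ
  exact (((hi 0).pow 2).add ((hi 1).pow 2)).add ((hi 2).pow 2) |>.congr_deriv (by ring)

lemma normSq_le_two_inner_burgersField (y : V3) :
    y 0 ^ 2 + y 1 ^ 2 + y 2 ^ 2 ≤
      2 * (y 0 * burgersField y 0 + y 1 * burgersField y 1 + y 2 * burgersField y 2) := by
  simp only [burgersField, Matrix.cons_val_zero, Matrix.cons_val_one, Matrix.cons_val_two,
    Matrix.head_cons, Matrix.tail_cons]
  linarith [burgersField_coercive y]

/-- Radial coercivity of the self-similar transport field of the profile and exponential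
escape of its trajectories: `|W̄(y)| ≤ |y₁|`, the field satisfies
`y·V(y) ≥ |y|²/2`, and hence any `C¹` trajectory of the field on `[s₀,∞)` satisfies
`|Φ(s)| ≥ |Φ(s₀)| e^{(s−s₀)/2}`. -/
theorem burgersField_coercive_and_trajectories_escape :
    (∀ y : V3, |Wbar y| ≤ |y 0|) ∧
    (∀ y : V3,
      1 / 2 * (y 0 ^ 2 + y 1 ^ 2 + y 2 ^ 2) ≤
        y 0 * (3 / 2 * y 0 + Wbar y) + 1 / 2 * y 1 ^ 2 + 1 / 2 * y 2 ^ 2) ∧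
    (∀ s₀ : ℝ, ∀ Φ : ℝ → V3,
      (∀ s ∈ Set.Ici s₀, HasDerivWithinAt Φ (burgersField (Φ s)) (Set.Ici s₀) s) →
      ∀ s ∈ Set.Ici s₀, eNorm3 (Φ s₀) * Real.exp ((s - s₀) / 2) ≤ eNorm3 (Φ s)) := by
  refine ⟨abs_Wbar_le, burgersField_coercive, fun s₀ Φ hΦ s hs => ?_⟩
  have growth := mul_exp_le_of_mul_le_deriv (c := 1) (fun t ht => (hΦ t ht).sq_add_sq_add_sq)
    (fun t _ => (one_mul _).trans_le (normSq_le_two_inner_burgersField (Φ t))) hs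
  have := sqrt_le_sqrt growth
  rwa [sqrt_mul (by positivity), one_mul, ← exp_half] at this
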